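/- Let m ≥ 2, 1 ≤ k ≤ m, and set β = m(m−k)/((m+2)(m−1)). If a real m×m matrix A satisfies (m/k)·‖ (1−β)·A + β·(tr A/m)·I ‖ = 0, where I is the m×m identity and ‖·‖ is the operator norm, then A = 0. Consequently the map A ↦ (m/k)·‖ (1−β)·A + β·(tr A/m)·I ‖ is a norm on the space of real m×m matrices. -/
import Mathlib


open Matrix

/-- The operator norm on `m × m` real matrices induced by the Euclidean norm. -/
noncomputable def opNorm {m : ℕ} (A : Matrix (Fin m) (Fin m) ℝ) : ℝ :=
  ‖Matrix.toEuclideanCLM (𝕜 := ℝ) (n := Fin m) A‖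

/-- The haar-k Q-seminorm is definite: if
`(m/k)·‖(1−β)·A + β·(tr A/m)·I‖ = 0` with `β = m(m−k)/((m+2)(m−1))`, then `A = 0`
(so the map is a norm). -/
theorem haar_k_seminorm_is_norm (m k : ℕ) (hm : 2 ≤ m) (hk : 1 ≤ k) (hkm : k ≤ m)
    (A : Matrix (Fin m) (Fin m) ℝ)
    (h : ((m : ℝ) / k) *
        opNorm
          ((1 - ((m : ℝ) * ((m : ℝ) - (k : ℝ))) / (((m : ℝ) + 2) * ((m : ℝ) - 1))) • A +
            ((((m : ℝ) * ((m : ℝ) - (k : ℝ))) / (((m : ℝ) + 2) * ((m : ℝ) - 1))) *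
              (Matrix.trace A / m)) • (1 : Matrix (Fin m) (Fin m) ℝ)) = 0) :
    A = 0 := by
  have hm' : (2:ℝ) ≤ (m:ℝ) := by exact_mod_cast hm
  have hk' : (1:ℝ) ≤ (k:ℝ) := by exact_mod_cast hk
  have hkm' : (k:ℝ) ≤ (m:ℝ) := by exact_mod_cast hkm
  have hm0 : (0:ℝ) < (m:ℝ) := by linarith
  have hk0 : (0:ℝ) < (k:ℝ) := by linarith
  set β : ℝ := ((m : ℝ) * ((m : ℝ) - (k : ℝ))) / (((m : ℝ) + 2) * ((m : ℝ) - 1)) with hβdef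
  have hden : (0:ℝ) < ((m:ℝ) + 2) * ((m:ℝ) - 1) := by nlinarith
  have hβlt : β < 1 := by
    rw [hβdef, div_lt_one hden]
    nlinarith
  have hmk : (0:ℝ) < (m:ℝ)/(k:ℝ) := div_pos hm0 hk0
  have hnorm : opNorm ((1 - β) • A + (β * (Matrix.trace A / m)) • (1 : Matrix (Fin m) (Fin m) ℝ)) = 0 := by
    rcases mul_eq_zero.mp h with h1 | h1
    · exact absurd h1 (ne_of_gt hmk)
    · exact h1
  have hX : (1 - β) • A + (β * (Matrix.trace A / m)) • (1 : Matrix (Fin m) (Fin m) ℝ) = 0 := by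
    have h2 := norm_eq_zero.mp hnorm
    have h3 := congrArg (Matrix.toEuclideanCLM (𝕜 := ℝ) (n := Fin m)).symm h2
    simpa using h3
  have htr : Matrix.trace A = 0 := by
    have h4 := congrArg Matrix.trace hX
    simp [Matrix.trace_smul, Matrix.trace_one, smul_eq_mul] at h4
    have hm0' : (m:ℝ) ≠ 0 := ne_of_gt hm0
    field_simp at h4
    nlinarith [h4]
  rw [htr] at hX
  simp at hX
  rcases hX with h5 | h5
  · exact absurd (by linarith : β = 1) (ne_of_lt hβlt)
  · exact h5
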